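/- arXiv:1512.08666 — 2 statements merged into one kernel-verified Lean document; each statement's English description precedes it below -/
import Mathlib

section
/- With B_i = -A_i = -(q-q^{-1})/(y_i - 1) and the coefficients ĉ_{1j} = Σ_{routes 1 ≺ m⃗ ≺ j} c_{1,m⃗,j} B_{1,m⃗} q^{ρ̃₁ - ρ̃_j} where c_{li} = q^{ρ̃_i - ρ̃_l + 1} for all intermediate nodes l < i in the linearly ordered segment, the telescoping identity ĉ_{1j} = q B₁ (1 + Σ_{i=2}^{j-1} ĉ_{ij}) holds; iterating gives 1 + Σ_{i=1}^{j-1} ĉ_{ij} = ∏_{i=1}^{j-1} q B_i when all nodes 1,…,j-1 are below j' (the gl-type segment), i.e. Ĉ_j = ∏_{i=1}^{j-1} (1 - q A_i) in the linearly ordered (type A) case. -/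
/-- Product of `c`-factors along the consecutive pairs of a route list. -/
noncomputable def cprod {K : Type*} [Field K] (c : ℕ → ℕ → K) : List ℕ → K
  | [] => 1
  | [_] => 1
  | a :: b :: t => c a b * cprod c (b :: t)

/-- `c_{ab} = q^{ρ̃_b - ρ̃_a + 1} = q^{1+a-b}` for the linearly ordered (type A) segment. -/
noncomputable def cCoef {K : Type*} [Field K] (q : K) (a b : ℕ) : K :=
  q ^ (1 + (a : ℤ) - (b : ℤ))

/-- `A_i = (q-q⁻¹)/(y_i - 1)`. -/
noncomputable def Afn {K : Type*} [Field K] (q : K) (y : ℕ → K) (i : ℕ) : K :=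
  (q - q⁻¹) / (y i - 1)

/-- `B_i = -A_i`. -/
noncomputable def Bfn {K : Type*} [Field K] (q : K) (y : ℕ → K) (i : ℕ) : K :=
  -Afn q y i

/-- `ĉ_{ij} = Σ_{routes m⃗ (all subsets of (i,j)), including empty}
c_{i,m⃗,j} B_{i,m⃗} q^{ρ̃_i - ρ̃_j}`. -/
noncomputable def chat {K : Type*} [Field K] (q : K) (y : ℕ → K) (i j : ℕ) : K :=
  ∑ S ∈ (Finset.Ioo i j).powerset,
    cprod (cCoef q) (i :: S.sort (· ≤ ·) ++ [j])
      * (Bfn q y i * ∏ m ∈ S, Bfn q y m) * q ^ ((j : ℤ) - (i : ℤ))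

lemma cprod_chain {K : Type*} [Field K] {q : K} (hq0 : q ≠ 0) :
    ∀ (t : List ℕ) (a b : ℕ),
      cprod (cCoef q) (a :: t ++ [b]) = q ^ ((t.length : ℤ) + 1 + a - b) := by
  intro t
  induction t with
  | nil => intro a b; simp [cprod, cCoef]
  | cons c t' ih =>
      intro a b
      show cCoef q a c * cprod (cCoef q) (c :: t' ++ [b]) = _
      rw [ih c b, cCoef, ← zpow_add₀ hq0]
      congr 1
      simp [List.length_cons]
      push_cast
      ring


lemma chat_closed {K : Type*} [Field K] {q : K} (hq0 : q ≠ 0) (y : ℕ → K) (i j : ℕ) :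
    chat q y i j = q * Bfn q y i * ∏ m ∈ Finset.Ioo i j, (1 + q * Bfn q y m) := by
  have hsum : ∏ m ∈ Finset.Ioo i j, (q * Bfn q y m + 1)
      = ∑ S ∈ (Finset.Ioo i j).powerset, ∏ m ∈ S, (q * Bfn q y m) := by
    rw [Finset.prod_add]
    simp
  rw [chat]
  have hterm : ∀ S ∈ (Finset.Ioo i j).powerset,
      cprod (cCoef q) (i :: S.sort (· ≤ ·) ++ [j])
        * (Bfn q y i * ∏ m ∈ S, Bfn q y m) * q ^ ((j : ℤ) - (i : ℤ))
      = q * Bfn q y i * ∏ m ∈ S, (q * Bfn q y m) := by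
    intro S _
    rw [cprod_chain hq0, Finset.length_sort, Finset.prod_mul_distrib,
      Finset.prod_const]
    have hcard : q ^ ((S.card : ℤ) + 1 + i - j) * q ^ ((j : ℤ) - (i : ℤ))
        = q * q ^ S.card := by
      rw [← zpow_add₀ hq0]
      have : (S.card : ℤ) + 1 + i - j + ((j : ℤ) - i) = (S.card : ℤ) + 1 := by ring
      rw [this, zpow_add₀ hq0, zpow_natCast, zpow_one, mul_comm]
    calc q ^ ((S.card : ℤ) + 1 + i - j) * (Bfn q y i * ∏ m ∈ S, Bfn q y m)
          * q ^ ((j : ℤ) - (i : ℤ))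
        = (q ^ ((S.card : ℤ) + 1 + i - j) * q ^ ((j : ℤ) - (i : ℤ)))
            * (Bfn q y i * ∏ m ∈ S, Bfn q y m) := by ring
      _ = _ := by rw [hcard]; ring
  rw [Finset.sum_congr rfl hterm, ← Finset.mul_sum, ← hsum]
  congr 1
  exact Finset.prod_congr rfl fun m _ => by ring

lemma sum_chat {K : Type*} [Field K] {q : K} (hq0 : q ≠ 0) (y : ℕ → K) (j : ℕ) :
    ∀ a, 1 + ∑ i ∈ Finset.Ico a j, chat q y i j
        = ∏ i ∈ Finset.Ico a j, (1 + q * Bfn q y i) := by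
  suffices h : ∀ n a, j - a ≤ n →
      1 + ∑ i ∈ Finset.Ico a j, chat q y i j
        = ∏ i ∈ Finset.Ico a j, (1 + q * Bfn q y i) from
    fun a => h _ a le_rfl
  intro n
  induction n with
  | zero =>
      intro a ha
      rw [Finset.Ico_eq_empty (by omega : ¬ a < j)]
      simp
  | succ n ih =>
      intro a ha
      by_cases h : a < j
      · have hins : insert a (Finset.Ico (a + 1) j) = Finset.Ico a j := by
          rw [Finset.insert_Ico_add_one_left_eq_Ico h]
        have hnot : a ∉ Finset.Ico (a + 1) j := by simp
        rw [← hins, Finset.sum_insert hnot, Finset.prod_insert hnot]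
        have hih := ih (a + 1) (by omega)
        have hioo : Finset.Ioo a j = Finset.Ico (a + 1) j :=
          (Finset.Ico_add_one_left_eq_Ioo ..).symm
        rw [chat_closed hq0, hioo, ← hih]
        ring
      · rw [Finset.Ico_eq_empty h]
        simp

/-- **Telescoping identity and factorization of `Ĉ_j` in the type A case:**
`ĉ_{1j} = qB₁(1 + Σ_{i=2}^{j-1} ĉ_{ij})`, and iterating,
`Ĉ_j = 1 + Σ_{i=1}^{j-1} ĉ_{ij} = ∏_{i=1}^{j-1}(1 - qA_i)`. -/
theorem chat_telescoping {K : Type*} [Field K] (q : K)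
    (hq0 : q ≠ 0) (hq1 : q ^ 2 ≠ 1) (y : ℕ → K) (hy : ∀ i, y i ≠ 1) :
    (∀ j, 2 ≤ j →
      chat q y 1 j = q * Bfn q y 1 * (1 + ∑ i ∈ Finset.Ico 2 j, chat q y i j)) ∧
    (∀ j, 1 ≤ j →
      1 + ∑ i ∈ Finset.Ico 1 j, chat q y i j
        = ∏ i ∈ Finset.Ico 1 j, (1 - q * Afn q y i)) := by
  constructor
  · intro j hj
    have h2 : Finset.Ioo 1 j = Finset.Ico 2 j := (Finset.Ico_add_one_left_eq_Ioo ..).symm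
    rw [chat_closed hq0, h2, sum_chat hq0 y j 2]
  · intro j _
    rw [sum_chat hq0 y j 1]
    exact Finset.prod_congr rfl fun i _ => by simp [Bfn]; ring
end

section
/- For g = sp(2n), the factorized coefficient Ĉ_j(λ) = (1 - [2]_q q² A_{j'}) ∏_{i≠j'} (1 - qA_i), with A_i evaluated at y_i = q^{-2η_{ij}(λ)}, is nonzero for all λ if and only if q^{-2η_{ij}(λ)} ≠ q² for all i ≠ j', i < j, and q^{-2η_{j'j}(λ)} ≠ q⁴; equivalently, writing η_{ij}(λ) = (λ+ρ, ε_i-ε_j) - ½‖ε_i-ε_j‖², the module V⊗M_λ decomposes as a direct sum of the Verma modules M_{λ+ε_j} whenever (λ+ρ, ε_i - ε_j) ∉ S_{ij} for an explicit finite set S_{ij} of scalars depending only on ‖ε_i-ε_j‖² and the congruence q^{2z}=q^{2z'} ⟺ z = z' (q not a root of unity, λ integral). -/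
open RealInnerProductSpace

lemma chat_fact1 {q y : ℂ} (hq0 : q ≠ 0) (hy : y ≠ 1) :
    (1 - q * ((q - q⁻¹) / (y - 1)) ≠ 0) ↔ y ≠ q ^ (2 : ℤ) := by
  have hy1 : y - 1 ≠ 0 := sub_ne_zero.mpr hy
  have key : 1 - q * ((q - q⁻¹) / (y - 1)) = (y - q ^ 2) / (y - 1) := by
    field_simp
    ring
  rw [key, div_ne_zero_iff]
  constructor
  · rintro ⟨h, -⟩ he
    exact h (by rw [he]; push_cast [zpow_two]; ring)
  · intro h
    refine ⟨fun he => h ?_, hy1⟩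
    have : y = q ^ 2 := by linear_combination he
    rw [this]; push_cast [zpow_two]; ring

lemma chat_fact2 {q y : ℂ} (hq0 : q ≠ 0) (hy : y ≠ 1) :
    (1 - (q + q⁻¹) * q ^ 2 * ((q - q⁻¹) / (y - 1)) ≠ 0) ↔ y ≠ q ^ (4 : ℤ) := by
  have hy1 : y - 1 ≠ 0 := sub_ne_zero.mpr hy
  have key : 1 - (q + q⁻¹) * q ^ 2 * ((q - q⁻¹) / (y - 1)) = (y - q ^ 4) / (y - 1) := by
    field_simp
    ring
  have h4 : q ^ (4 : ℤ) = q ^ (4 : ℕ) := by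
    norm_cast
  rw [key, div_ne_zero_iff, h4]
  constructor
  · rintro ⟨h, -⟩ he
    exact h (by rw [he]; ring)
  · intro h
    refine ⟨fun he => h (by linear_combination he), hy1⟩

/-- **Nonvanishing criterion for `Ĉ_j(λ)`, `g = sp(2n)`.**  For `q` not a root of unity
and an integral weight `λ` (so that each `η_{ij}(λ) = (λ+ρ, ε_i-ε_j) - ½‖ε_i-ε_j‖²` is an
integer and `q^{2z} = q^{2z'} ⟺ z = z'`), the factorized coefficient
`Ĉ_j(λ) = (1 - [2]_q q² A_{j'}) ∏_{i≠j'} (1 - qA_i)` with `A_i` evaluated at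
`y_i = q^{-2η_{ij}(λ)}` is nonzero iff `q^{-2η_{ij}(λ)} ≠ q²` for all `i ∈ [1,j-1]`,
`i ≠ j'`, and `q^{-2η_{j'j}(λ)} ≠ q⁴`. -/
theorem Chat_nonzero_iff_sp {E : Type*} [NormedAddCommGroup E] [InnerProductSpace ℝ E]
    (n : ℕ) (hn : 1 ≤ n) (ε : ℕ → E)
    (horth : ∀ i j, 1 ≤ i → i ≤ n → 1 ≤ j → j ≤ n →
      ⟪ε i, ε j⟫ = (if i = j then (1 : ℝ) else 0))
    (hflip : ∀ i, 1 ≤ i → i ≤ n → ε (2 * n + 1 - i) = -ε i)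
    (ρ lam : E)
    (q : ℂ) (hq0 : q ≠ 0) (hq : ∀ k : ℕ, k ≠ 0 → q ^ k ≠ 1)
    (j : ℕ) (hj1 : n < j) (hj2 : j ≤ 2 * n)
    (η : ℕ → ℤ)
    (hη : ∀ i, ((η i : ℝ)) = ⟪lam + ρ, ε i - ε j⟫ - ‖ε i - ε j‖ ^ 2 / 2)
    (hgen : ∀ i ∈ Finset.Ico 1 j, q ^ (-2 * η i) ≠ 1)
    (A : ℕ → ℂ) (hA : ∀ i, A i = (q - q⁻¹) / (q ^ (-2 * η i) - 1)) :
    ((1 - (q + q⁻¹) * q ^ 2 * A (2 * n + 1 - j))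
        * ∏ i ∈ (Finset.Ico 1 j).erase (2 * n + 1 - j), (1 - q * A i)) ≠ 0
      ↔ ((∀ i ∈ (Finset.Ico 1 j).erase (2 * n + 1 - j), q ^ (-2 * η i) ≠ q ^ (2 : ℤ)) ∧
          q ^ (-2 * η (2 * n + 1 - j)) ≠ q ^ (4 : ℤ)) := by
  have hj'mem : (2 * n + 1 - j) ∈ Finset.Ico 1 j := by
    refine Finset.mem_Ico.mpr ⟨?_, ?_⟩ <;> omega
  rw [mul_ne_zero_iff, Finset.prod_ne_zero_iff]
  constructor
  · rintro ⟨h1, h2⟩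
    refine ⟨fun i hi => ?_, ?_⟩
    · have hyi := hgen i (Finset.mem_of_mem_erase hi)
      have := h2 i hi
      rw [hA i] at this
      exact (chat_fact1 hq0 hyi).mp this
    · have hyj := hgen _ hj'mem
      rw [hA] at h1
      exact (chat_fact2 hq0 hyj).mp h1
  · rintro ⟨h1, h2⟩
    constructor
    · rw [hA]
      exact (chat_fact2 hq0 (hgen _ hj'mem)).mpr h2
    · intro i hi
      rw [hA i]
      exact (chat_fact1 hq0 (hgen i (Finset.mem_of_mem_erase hi))).mpr (h1 i hi)
end
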